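/- Let a > 0, t := (0,0,a), s(θ,φ) := a(cos θ sin φ, sin θ sin φ, cos φ), and N(θ,φ) := s(θ,φ)/a. Define Γ_{pq} := −(1/(4π)) ∫₀^{2π} ∫₀^{π} (s_p(θ,φ) − t_p) N_q(θ,φ) / ‖s(θ,φ) − t‖³ · a² sin φ dφ dθ for 1 ≤ p,q ≤ 3. Then Γ_{pq} = 0 whenever p ≠ q. -/

import Mathlib

noncomputable section

open Real MeasureTheory
open scoped BigOperators RealInnerProductSpace

/-- ℝ³ with the Euclidean norm. -/
abbrev R3 : Type := EuclideanSpace ℝ (Fin 3)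

/-- ℂ³ (componentwise). -/
abbrev C3 : Type := Fin 3 → ℂ

/-- The j-th partial derivative of a complex-valued function on ℝ³. -/
def pd (j : Fin 3) (f : R3 → ℂ) (x : R3) : ℂ :=
  fderiv ℝ f x (EuclideanSpace.single j 1)

/-- curl F = (∂₂F₃ − ∂₃F₂, ∂₃F₁ − ∂₁F₃, ∂₁F₂ − ∂₂F₁) (0-indexed). -/
def curl (F : R3 → C3) (x : R3) : C3 :=
  ![pd 1 (fun y => F y 2) x - pd 2 (fun y => F y 1) x,
    pd 2 (fun y => F y 0) x - pd 0 (fun y => F y 2) x,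
    pd 0 (fun y => F y 1) x - pd 1 (fun y => F y 0) x]

/-- The gradient (∂₁f, ∂₂f, ∂₃f) as a vector in ℂ³. -/
def grad (f : R3 → ℂ) (x : R3) : C3 := fun j => pd j f x

/-- The outgoing Green's function of the Helmholtz operator with wave number k. -/
def g (k : ℝ) (x y : R3) : ℂ :=
  Complex.exp (Complex.I * k * ‖x - y‖) / (4 * Real.pi * ‖x - y‖)

/-- The Euclidean norm on ℂ³. -/
def norm3 (v : C3) : ℝ := ‖(WithLp.equiv 2 (Fin 3 → ℂ)).symm v‖

/-- Spherical parametrization s(θ,φ) of the sphere of radius a centered at the origin. -/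
def sph (a θ φ : ℝ) : R3 :=
  WithLp.toLp 2 ![a * (Real.cos θ * Real.sin φ), a * (Real.sin θ * Real.sin φ), a * Real.cos φ]

/-- The north pole t = (0,0,a). -/
def tpole (a : ℝ) : R3 := WithLp.toLp 2 ![0, 0, a]

/-- The matrix Γ_{pq} = ∫_S (∂g₀(s,t)/∂s_p) N_q(s) ds for the sphere of radius a
centered at the origin, with t = (0,0,a), N = s/a, in spherical coordinates. -/
def Gam (a : ℝ) (p q : Fin 3) : ℝ :=
  -(1 / (4 * Real.pi)) *
    ∫ θ in (0:ℝ)..(2 * Real.pi), ∫ φ in (0:ℝ)..Real.pi,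
      (sph a θ φ p - tpole a p) * ((a⁻¹ • sph a θ φ) q) /
          ‖sph a θ φ - tpole a‖ ^ 3 * a ^ 2 * Real.sin φ

/-! Since `t` is the pole, `‖s - t‖` depends only on `φ`, and every component of `s - t` and of
`N` is one of `cos θ`, `sin θ`, `1` times a function of `φ`. The integrand of `Γ_pq` therefore
separates, with `θ`-factor the product of two distinct members of the orthogonal system
`cos θ, sin θ, 1` on `[0, 2π]`, whose integral vanishes. -/

def azimuthalFactor (p : Fin 3) (θ : ℝ) : ℝ := ![Real.cos θ, Real.sin θ, 1] p

def polarFactor (a : ℝ) (p : Fin 3) (φ : ℝ) : ℝ :=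
  ![a * Real.sin φ, a * Real.sin φ, a * Real.cos φ] p

lemma sph_apply (a θ φ : ℝ) (p : Fin 3) :
    sph a θ φ p = azimuthalFactor p θ * polarFactor a p φ := by
  fin_cases p <;> simp [sph, azimuthalFactor, polarFactor] <;> ring

lemma sph_sub_tpole_apply (a θ φ : ℝ) (p : Fin 3) :
    sph a θ φ p - tpole a p = azimuthalFactor p θ * (polarFactor a p φ - tpole a p) := by
  fin_cases p <;> simp [sph, tpole, azimuthalFactor, polarFactor] <;> ring

lemma norm_sph_sub_tpole (a θ φ : ℝ) :
    ‖sph a θ φ - tpole a‖ = ‖sph a 0 φ - tpole a‖ := by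
  simp only [EuclideanSpace.norm_eq, Fin.sum_univ_three, PiLp.sub_apply, sph, tpole,
    Matrix.cons_val_zero, Matrix.cons_val_one, Matrix.cons_val_two,
    Matrix.head_cons, Matrix.tail_cons, Real.norm_eq_abs, sq_abs, Real.cos_zero, Real.sin_zero]
  congr 1
  linear_combination (a * Real.sin φ) ^ 2 * Real.sin_sq_add_cos_sq θ

lemma integral_azimuthalFactor_mul_eq_zero {p q : Fin 3} (hpq : p ≠ q) :
    ∫ θ in (0:ℝ)..2 * π, azimuthalFactor p θ * azimuthalFactor q θ = 0 := by
  have hsin_cos : ∫ θ in (0:ℝ)..2 * π, Real.sin θ * Real.cos θ = 0 := by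
    simp [integral_sin_mul_cos₁]
  fin_cases p <;> fin_cases q <;> simp_all [azimuthalFactor, mul_comm (Real.cos _)]

lemma intervalIntegral_integral_mul_eq_zero {a b c d : ℝ} (T f : ℝ → ℝ)
    (hT : ∫ x in a..b, T x = 0) :
    ∫ x in a..b, ∫ y in c..d, T x * f y = 0 := by
  simp only [intervalIntegral.integral_const_mul, intervalIntegral.integral_mul_const, hT,
    zero_mul]

theorem Gamma_offdiag_general (a : ℝ) :
    ∀ p q : Fin 3, p ≠ q → Gam a p q = 0 := by
  intro p q hpq
  have hseparate : ∀ θ φ, (sph a θ φ p - tpole a p) * ((a⁻¹ • sph a θ φ) q) /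
        ‖sph a θ φ - tpole a‖ ^ 3 * a ^ 2 * Real.sin φ =
      (azimuthalFactor p θ * azimuthalFactor q θ) *
        ((polarFactor a p φ - tpole a p) * (a⁻¹ * polarFactor a q φ) /
          ‖sph a 0 φ - tpole a‖ ^ 3 * a ^ 2 * Real.sin φ) := by
    intro θ φ
    rw [PiLp.smul_apply, smul_eq_mul, sph_sub_tpole_apply, sph_apply, norm_sph_sub_tpole]
    ring
  simp only [Gam, hseparate,
    intervalIntegral_integral_mul_eq_zero _ _ (integral_azimuthalFactor_mul_eq_zero hpq), mul_zero]

/-- Γ_{pq} = 0 for p ≠ q, for the sphere of radius a > 0. -/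
theorem Gamma_offdiag (a : ℝ) (ha : 0 < a) :
    ∀ p q : Fin 3, p ≠ q → Gam a p q = 0 :=
  Gamma_offdiag_general a
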